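/- arXiv:2306.02412 — 2 statements merged into one kernel-verified Lean document; each statement's English description precedes it below -/
import Mathlib

section
/- If C ⊆ ℝⁿ is an affine subspace, Ψ : ℝⁿ → ℝ is differentiable and strictly convex, y ∈ ℝⁿ, and p ∈ C minimizes z ↦ D_Ψ(z,y) over C, then for all x ∈ C the pythagorean identity holds: D_Ψ(x,p) + D_Ψ(p,y) = D_Ψ(x,y). -/
open scoped RealInnerProductSpace

/-- Pythagorean identity for Brègman projections onto affine subspaces. -/
theorem bregman_pythagorean_affine (n : ℕ) (Ψ : EuclideanSpace ℝ (Fin n) → ℝ)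
    (Ψ' : EuclideanSpace ℝ (Fin n) → EuclideanSpace ℝ (Fin n))
    (hdiff : ∀ x, HasGradientAt Ψ (Ψ' x) x)
    (hconv : StrictConvexOn ℝ Set.univ Ψ)
    (C : AffineSubspace ℝ (EuclideanSpace ℝ (Fin n)))
    (y p : EuclideanSpace ℝ (Fin n)) (hp : p ∈ C)
    (hmin : ∀ z ∈ C, Ψ p - Ψ y - ⟪p - y, Ψ' y⟫ ≤ Ψ z - Ψ y - ⟪z - y, Ψ' y⟫) :
    ∀ x ∈ C, (Ψ x - Ψ p - ⟪x - p, Ψ' p⟫) + (Ψ p - Ψ y - ⟪p - y, Ψ' y⟫) =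
      Ψ x - Ψ y - ⟪x - y, Ψ' y⟫ := by
  intro x hx
  set v := x - p with hv
  -- the line through p in direction v stays in C
  have hline : ∀ t : ℝ, p + t • v ∈ C := by
    intro t
    have := AffineSubspace.smul_vsub_vadd_mem C t hx hp hp
    simpa [vsub_eq_sub, vadd_eq_add, hv, add_comm] using this
  -- g t := D_Ψ(p + t v, y)
  set g : ℝ → ℝ := fun t => Ψ (p + t • v) - Ψ y - ⟪p + t • v - y, Ψ' y⟫ with hg
  have hmin0 : IsLocalMin g 0 := by
    refine Filter.Eventually.of_forall fun t => ?_
    have := hmin _ (hline t)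
    simpa [hg] using this
  -- derivative of g at 0
  have hL : HasDerivAt (fun t : ℝ => p + t • v) v 0 := by
    simpa using ((hasDerivAt_id (0:ℝ)).smul_const v).const_add p
  have h1 : HasDerivAt (fun t : ℝ => Ψ (p + t • v)) ⟪Ψ' p, v⟫ 0 := by
    have hF := (hdiff (p + (0:ℝ) • v)).hasFDerivAt
    have := hF.comp_hasDerivAt 0 hL
    simpa [InnerProductSpace.toDual_apply_apply, Function.comp_def] using this
  have h2 : HasDerivAt (fun t : ℝ => ⟪p + t • v - y, Ψ' y⟫) ⟪v, Ψ' y⟫ 0 := by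
    have : (fun t : ℝ => ⟪p + t • v - y, Ψ' y⟫)
        = fun t : ℝ => ⟪p - y, Ψ' y⟫ + t * ⟪v, Ψ' y⟫ := by
      funext t
      rw [show p + t • v - y = (p - y) + t • v by abel, inner_add_left,
        real_inner_smul_left]
    rw [this]
    simpa using ((hasDerivAt_id (0:ℝ)).mul_const ⟪v, Ψ' y⟫).const_add ⟪p - y, Ψ' y⟫
  have hg' : HasDerivAt g (⟪Ψ' p, v⟫ - ⟪v, Ψ' y⟫) 0 := by
    simpa [hg, Pi.sub_def] using (h1.sub_const (Ψ y)).sub h2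
  have hzero : ⟪Ψ' p, v⟫ - ⟪v, Ψ' y⟫ = 0 := hmin0.hasDerivAt_eq_zero hg'
  have hkey : ⟪x - p, Ψ' p⟫ = ⟪x - p, Ψ' y⟫ := by
    have h3 := real_inner_comm (Ψ' p) v
    rw [← hv]
    linarith
  have hsplit : ⟪x - y, Ψ' y⟫ = ⟪x - p, Ψ' y⟫ + ⟪p - y, Ψ' y⟫ := by
    rw [← inner_add_left]
    congr 1
    abel
  rw [hkey, hsplit]
  ring
end

section
/- If Ψ : ℝⁿ → ℝ is differentiable, strictly convex, and coercive (Ψ(x)/‖x‖ → ∞ as ‖x‖ → ∞), C ⊆ ℝⁿ is nonempty, closed, and convex, and y ∈ ℝⁿ, then there exists a unique p ∈ C minimizing z ↦ D_Ψ(z,y) over C. -/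
open scoped RealInnerProductSpace

/-- Existence and uniqueness of Brègman projections onto nonempty closed convex sets,
for a supercoercive strictly convex differentiable `Ψ`. -/
theorem bregman_projection_exists_unique (n : ℕ) (Ψ : EuclideanSpace ℝ (Fin n) → ℝ)
    (Ψ' : EuclideanSpace ℝ (Fin n) → EuclideanSpace ℝ (Fin n))
    (hdiff : ∀ x, HasGradientAt Ψ (Ψ' x) x)
    (hconv : StrictConvexOn ℝ Set.univ Ψ)
    (hcoercive : Filter.Tendsto (fun x => Ψ x / ‖x‖) (Bornology.cobounded _) Filter.atTop)
    (C : Set (EuclideanSpace ℝ (Fin n))) (hC : C.Nonempty) (hCclosed : IsClosed C)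
    (hCconvex : Convex ℝ C)
    (y : EuclideanSpace ℝ (Fin n)) :
    ∃! p, p ∈ C ∧ ∀ z ∈ C,
      Ψ p - Ψ y - ⟪p - y, Ψ' y⟫ ≤ Ψ z - Ψ y - ⟪z - y, Ψ' y⟫ := by
  set v := Ψ' y with hv
  set g : EuclideanSpace ℝ (Fin n) → ℝ := fun z => Ψ z - Ψ y - ⟪z - y, v⟫ with hg
  -- continuity of Ψ, hence of g
  have hΨcont : Continuous Ψ :=
    continuous_iff_continuousAt.2 fun x => (hdiff x).hasFDerivAt.continuousAt
  have hgcont : Continuous g := by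
    apply ((hΨcont.sub continuous_const).sub)
    exact Continuous.inner (continuous_id.sub continuous_const) continuous_const
  -- coercivity of g
  have hcoe : Filter.Tendsto g (Filter.cocompact _) Filter.atTop := by
    rw [← Metric.cobounded_eq_cocompact]
    rw [Filter.tendsto_atTop] at hcoercive ⊢
    intro K
    have h1 := hcoercive (‖v‖ + 1)
    have h2 : ∀ᶠ x in Bornology.cobounded (EuclideanSpace ℝ (Fin n)),
        max (K + Ψ y + |⟪y, v⟫|) 1 ≤ ‖x‖ := by
      exact (Filter.tendsto_atTop.1 tendsto_norm_cobounded_atTop) _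
    filter_upwards [h1, h2] with x hx1 hx2
    have hxpos : (0:ℝ) < ‖x‖ := lt_of_lt_of_le one_pos (le_trans (le_max_right _ _) hx2)
    have hΨ : (‖v‖ + 1) * ‖x‖ ≤ Ψ x := by
      exact (le_div_iff₀ hxpos).1 hx1
    have hinner : ⟪x - y, v⟫ ≤ ‖x‖ * ‖v‖ + |⟪y, v⟫| := by
      have := real_inner_le_norm x v
      have h' : ⟪x - y, v⟫ = ⟪x, v⟫ - ⟪y, v⟫ := by rw [inner_sub_left]
      have := abs_le.1 (le_refl |⟪y, v⟫|) |>.1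
      linarith [real_inner_le_norm x v, neg_abs_le (⟪y, v⟫ : ℝ)]
    have hK : K + Ψ y + |⟪y, v⟫| ≤ ‖x‖ := le_trans (le_max_left _ _) hx2
    simp only [hg]
    nlinarith [hΨ, hinner, hK]
  -- existence of a minimizer on C
  obtain ⟨c, hc⟩ := hC
  obtain ⟨p, hpC, hpmin⟩ := hgcont.continuousOn.exists_isMinOn' hCclosed hc
    ((hcoe.eventually (Filter.eventually_ge_atTop (g c))).filter_mono inf_le_left)
  -- strict convexity of g on C
  have hgstrict : StrictConvexOn ℝ C g := by
    have haff : ConvexOn ℝ Set.univ (fun z : EuclideanSpace ℝ (Fin n) =>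
        -Ψ y - ⟪z - y, v⟫) := by
      refine ⟨convex_univ, fun a _ b _ ta tb hta htb hab => ?_⟩
      simp only [smul_eq_mul, inner_sub_left, inner_add_left, real_inner_smul_left]
      apply le_of_eq
      linear_combination (Ψ y - ⟪y, v⟫) * hab
    have : StrictConvexOn ℝ Set.univ g := by
      have h := hconv.add_convexOn haff
      have heq : g = Ψ + fun z => -Ψ y - ⟪z - y, v⟫ := by
        funext z; simp only [hg, Pi.add_apply]; ring
      rwa [heq]
    exact this.subset (Set.subset_univ C) hCconvex
  refine ⟨p, ⟨hpC, fun z hz => hpmin hz⟩, ?_⟩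
  rintro q ⟨hqC, hqmin⟩
  exact hgstrict.eq_of_isMinOn (fun z hz => hqmin z hz) (fun z hz => hpmin hz) hqC hpC
end
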